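/- arXiv:2410.19386 — 2 statements merged into one kernel-verified Lean document; each statement's English description precedes it below -/
import Mathlib

section
/- Completeness of saturation: if δ' ⊇ δ is closed under the saturation rule, then pre*(L(A)) ⊆ L(A'), where A = (Q,Σ,δ,q₀,F) and A' = (Q,Σ,δ',q₀,F). -/
/-- Symbols of a grammar: variables `V` or terminals `T`. -/
abbrev GSym (V T : Type) := V ⊕ T

/-- A context-free grammar: a set of productions and a start variable. -/
structure CFG (V T : Type) where
  P : Set (V × List (GSym V T))
  S : V

/-- One-step derivation: apply a production in an arbitrary context. -/
def CFG.DStep {V T : Type} (G : CFG V T) (x y : List (GSym V T)) : Prop :=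
  ∃ (α γ : List (GSym V T)) (A : V) (β : List (GSym V T)),
    (A, β) ∈ G.P ∧ x = α ++ Sum.inl A :: γ ∧ y = α ++ β ++ γ

/-- `⇒*`: reflexive-transitive closure of one-step derivation. -/
def CFG.Derives {V T : Type} (G : CFG V T) : List (GSym V T) → List (GSym V T) → Prop :=
  Relation.ReflTransGen G.DStep

/-- `pre*(L)`: the set of predecessors of `L`. -/
def CFG.preStar {V T : Type} (G : CFG V T) (L : Set (List (GSym V T))) :
    Set (List (GSym V T)) :=
  {α | ∃ β ∈ L, G.Derives α β}

/-- Path relation of a nondeterministic automaton given by transitions `δ`. -/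
inductive NPath {V T Q : Type} (δ : Set (Q × GSym V T × Q)) : Q → List (GSym V T) → Q → Prop
  | nil (q : Q) : NPath δ q [] q
  | cons {q q'' q' : Q} {a : GSym V T} {w : List (GSym V T)} :
      (q, a, q'') ∈ δ → NPath δ q'' w q' → NPath δ q (a :: w) q'

/-- Language accepted from initial state `q₀` with final states `F`. -/
def NAccepts {V T Q : Type} (δ : Set (Q × GSym V T × Q)) (q₀ : Q) (F : Set Q) :
    Set (List (GSym V T)) :=
  {w | ∃ qf ∈ F, NPath δ q₀ w qf}

/-- `δ` is closed under the saturation rule for grammar `G`. -/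
def SatClosed {V T Q : Type} (G : CFG V T) (δ : Set (Q × GSym V T × Q)) : Prop :=
  ∀ (A : V) (β : List (GSym V T)) (q q' : Q),
    (A, β) ∈ G.P → NPath δ q β q' → (q, Sum.inl A, q') ∈ δ

/-- One application of the saturation rule. -/
def SatStep {V T Q : Type} (G : CFG V T) (δ₁ δ₂ : Set (Q × GSym V T × Q)) : Prop :=
  ∃ (A : V) (β : List (GSym V T)) (q q' : Q),
    (A, β) ∈ G.P ∧ NPath δ₁ q β q' ∧ δ₂ = insert (q, Sum.inl A, q') δ₁

/-- The saturated transition relation: smallest superset of `δ` closed under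
the saturation rule (given as the intersection of all closed supersets). -/
def satClosure {V T Q : Type} (G : CFG V T) (δ : Set (Q × GSym V T × Q)) :
    Set (Q × GSym V T × Q) :=
  ⋂₀ {δ' | δ ⊆ δ' ∧ SatClosed G δ'}


lemma NPath.append {V T Q : Type} {δ : Set (Q × GSym V T × Q)} {q q' : Q}
    {u v : List (GSym V T)} (h : NPath δ q (u ++ v) q') :
    ∃ m, NPath δ q u m ∧ NPath δ m v q' := by
  induction u generalizing q with
  | nil => exact ⟨q, NPath.nil q, h⟩
  | cons a w ih =>
    cases h with
    | cons h1 h2 =>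
      obtain ⟨m, hm1, hm2⟩ := ih h2
      exact ⟨m, NPath.cons h1 hm1, hm2⟩

lemma NPath.comp {V T Q : Type} {δ : Set (Q × GSym V T × Q)} {q m q' : Q}
    {u v : List (GSym V T)} (h1 : NPath δ q u m) (h2 : NPath δ m v q') :
    NPath δ q (u ++ v) q' := by
  induction h1 with
  | nil => exact h2
  | cons ht _ ih => exact NPath.cons ht (ih h2)

lemma NPath.mono {V T Q : Type} {δ δ' : Set (Q × GSym V T × Q)} {q q' : Q}
    {u : List (GSym V T)} (hsub : δ ⊆ δ') (h : NPath δ q u q') : NPath δ' q u q' := by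
  induction h with
  | nil q => exact NPath.nil q
  | cons ht _ ih => exact NPath.cons (hsub ht) ih

theorem saturation_complete {V T Q : Type} (G : CFG V T)
    (δ δ' : Set (Q × GSym V T × Q)) (q₀ : Q) (F : Set Q)
    (hsub : δ ⊆ δ') (hclosed : SatClosed G δ') :
    G.preStar (NAccepts δ q₀ F) ⊆ NAccepts δ' q₀ F := by
  rintro α ⟨β, ⟨qf, hqf, hpath⟩, hder⟩
  refine ⟨qf, hqf, ?_⟩
  have hpath' : NPath δ' q₀ β qf := hpath.mono hsub
  clear hpath
  induction hder using Relation.ReflTransGen.head_induction_on with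
  | refl => exact hpath'
  | head hstep _ ih =>
    obtain ⟨a1, γ, A, b, hP, hx, hy⟩ := hstep
    subst hx
    have h := ih
    rw [hy] at h
    obtain ⟨m1, hm1, h2⟩ := NPath.append (u := a1 ++ b) (v := γ) h
    obtain ⟨m2, hm2, h3⟩ := NPath.append hm1
    have : (m2, Sum.inl A, m1) ∈ δ' := hclosed A b m2 m1 hP h3
    exact NPath.comp hm2 (NPath.cons this h2)
end

section
/- In the saturated automaton for {w}, the word w is accepted via the transition (q₀, S, q_n) if and only if w ∈ L(G); more precisely, (q₀, S, q_n) is a transition of A_pre* iff S ⇒* w. -/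
/-- The linear automaton accepting exactly `{w}`: states `q₀,…,q_n` (as `Fin (n+1)`)
and transitions `(q_{i-1}, wᵢ, q_i)`. -/
def linAuto {V T : Type} (w : List T) :
    Set (Fin (w.length + 1) × GSym V T × Fin (w.length + 1)) :=
  {t | ∃ i : Fin w.length, t = (i.castSucc, Sum.inr (w.get i), i.succ)}

section Aux
variable {V T Q : Type}

lemma derives_context {G : CFG V T} {x y : List (GSym V T)} (a b : List (GSym V T))
    (h : G.Derives x y) : G.Derives (a ++ x ++ b) (a ++ y ++ b) := by
  induction h with
  | refl => exact Relation.ReflTransGen.refl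
  | tail _ hstep ih =>
    refine ih.tail ?_
    obtain ⟨α, γ, A, β, hP, hx, hy⟩ := hstep
    exact ⟨a ++ α, γ ++ b, A, β, hP, by simp [hx], by simp [hy]⟩

lemma derives_append {G : CFG V T} {x x' y y' : List (GSym V T)}
    (h1 : G.Derives x x') (h2 : G.Derives y y') : G.Derives (x ++ y) (x' ++ y') := by
  have h1' := derives_context [] y h1
  have h2' := derives_context x' [] h2
  simp only [List.nil_append, List.append_nil] at h1' h2'
  exact h1'.trans h2'

lemma npath_append {δ : Set (Q × GSym V T × Q)} {q m q' : Q} {u v : List (GSym V T)}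
    (h1 : NPath δ q u m) (h2 : NPath δ m v q') : NPath δ q (u ++ v) q' := by
  induction h1 with
  | nil => exact h2
  | cons ht _ ih => exact NPath.cons ht (ih h2)

lemma npath_split {δ : Set (Q × GSym V T × Q)} {q q' : Q} {u v : List (GSym V T)}
    (h : NPath δ q (u ++ v) q') : ∃ m, NPath δ q u m ∧ NPath δ m v q' := by
  induction u generalizing q with
  | nil => exact ⟨q, NPath.nil q, h⟩
  | cons a u ih =>
    cases h with
    | cons ht hp =>
      obtain ⟨m, h1, h2⟩ := ih hp
      exact ⟨m, NPath.cons ht h1, h2⟩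

lemma npath_mono {δ δ' : Set (Q × GSym V T × Q)} (hsub : δ ⊆ δ') {q q' : Q}
    {u : List (GSym V T)} (h : NPath δ q u q') : NPath δ' q u q' := by
  induction h with
  | nil => exact NPath.nil _
  | cons ht _ ih => exact NPath.cons (hsub ht) ih

lemma subset_satClosure {G : CFG V T} {δ : Set (Q × GSym V T × Q)} :
    δ ⊆ satClosure G δ := by
  intro t ht
  rw [satClosure, Set.mem_sInter]
  exact fun δ' hδ' => hδ'.1 ht

lemma satClosure_subset {G : CFG V T} {δ δ' : Set (Q × GSym V T × Q)}
    (h1 : δ ⊆ δ') (h2 : SatClosed G δ') : satClosure G δ ⊆ δ' := by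
  intro t ht
  exact Set.mem_sInter.mp ht δ' ⟨h1, h2⟩

lemma satClosed_satClosure {G : CFG V T} {δ : Set (Q × GSym V T × Q)} :
    SatClosed G (satClosure G δ) := by
  intro A β q q' hP hpath
  rw [satClosure, Set.mem_sInter]
  intro δ' hδ'
  exact hδ'.2 A β q q' hP (npath_mono (satClosure_subset hδ'.1 hδ'.2) hpath)

/-- the segment `w_{i+1} … w_j` of the word, as symbols. -/
def seg (w : List T) (i j : ℕ) : List (GSym V T) :=
  (((w.map Sum.inr) : List (GSym V T)).take j).drop i

lemma seg_self (w : List T) (i : ℕ) : seg (V := V) w i i = [] := by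
  apply List.drop_eq_nil_of_le
  simp [seg, List.length_take]

lemma seg_full (w : List T) : seg (V := V) w 0 w.length = w.map Sum.inr := by
  simp [seg]

lemma seg_concat {w : List T} {i j k : ℕ} (hij : i ≤ j) (hjk : j ≤ k)
    (hk : k ≤ w.length) : seg (V := V) w i j ++ seg w j k = seg w i k := by
  unfold seg
  have h1 : (w.map (Sum.inr : T → GSym V T)).take j
      = ((w.map Sum.inr).take k).take j := by
    rw [List.take_take, min_eq_left hjk]
  rw [h1]
  have h2 : i ≤ (((w.map (Sum.inr : T → GSym V T)).take k).take j).length := by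
    simp only [List.length_take, List.length_map]
    omega
  rw [← List.drop_append_of_le_length h2, List.take_append_drop]

lemma seg_single {w : List T} {i : ℕ} (hi : i < w.length) :
    seg (V := V) w i (i + 1) = [Sum.inr (w.get ⟨i, hi⟩)] := by
  unfold seg
  rw [List.take_succ]
  have hlen : ((w.map (Sum.inr : T → GSym V T)).take i).length = i := by
    simp; omega
  rw [List.drop_append_of_le_length (le_of_eq hlen.symm),
    List.drop_eq_nil_of_le (le_of_eq hlen)]
  simp [List.getElem?_eq_getElem (show i < (w.map (Sum.inr : T → GSym V T)).length by simpa using hi)]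

end Aux

section Main
variable {V T : Type}

/-- The "good" transition relation used for soundness. -/
def goodSet (G : CFG V T) (w : List T) :
    Set (Fin (w.length + 1) × GSym V T × Fin (w.length + 1)) :=
  {t | (t.1 : ℕ) ≤ (t.2.2 : ℕ) ∧ G.Derives [t.2.1] (seg w t.1 t.2.2)}

lemma linAuto_subset_goodSet (G : CFG V T) (w : List T) :
    linAuto w ⊆ goodSet G w := by
  rintro t ⟨i, rfl⟩
  constructor
  · simp
  · show G.Derives [Sum.inr (w.get i)] (seg w i.castSucc i.succ)
    have h : seg (V := V) w i.castSucc i.succ = [Sum.inr (w.get i)] := by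
      rw [Fin.coe_castSucc, Fin.val_succ, seg_single i.isLt]
    rw [h]
    exact Relation.ReflTransGen.refl

lemma npath_goodSet {G : CFG V T} {w : List T} {q q' : Fin (w.length + 1)}
    {u : List (GSym V T)} (h : NPath (goodSet G w) q u q') :
    (q : ℕ) ≤ (q' : ℕ) ∧ G.Derives u (seg w q q') := by
  induction h with
  | nil q => exact ⟨le_refl _, by rw [seg_self]; exact Relation.ReflTransGen.refl⟩
  | cons ht _ ih =>
    obtain ⟨h1, h2⟩ := ht
    obtain ⟨h3, h4⟩ := ih
    refine ⟨le_trans h1 h3, ?_⟩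
    have h5 := derives_append h2 h4
    rwa [seg_concat h1 h3 (Fin.is_le _), List.singleton_append] at h5

lemma goodSet_closed (G : CFG V T) (w : List T) : SatClosed G (goodSet G w) := by
  intro A β q q' hP hpath
  obtain ⟨h1, h2⟩ := npath_goodSet hpath
  exact ⟨h1, Relation.ReflTransGen.head ⟨[], [], A, β, hP, rfl, by simp⟩ h2⟩

lemma path_from (w : List T) (k : ℕ) :
    ∀ (i : ℕ) (h : i + k = w.length),
      NPath (linAuto (V := V) w) ⟨i, by omega⟩ ((w.map Sum.inr).drop i)
        (Fin.last w.length) := by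
  induction k with
  | zero =>
    intro i h
    have hi : i = w.length := by omega
    subst hi
    rw [List.drop_eq_nil_of_le (by simp)]
    exact NPath.nil _
  | succ k ih =>
    intro i h
    have hi : i < w.length := by omega
    have hi' : i < (w.map (Sum.inr : T → GSym V T)).length := by simpa using hi
    have hdrop : (w.map (Sum.inr : T → GSym V T)).drop i
        = Sum.inr (w.get ⟨i, hi⟩) :: (w.map Sum.inr).drop (i + 1) := by
      rw [List.drop_eq_getElem_cons hi']
      simp
    rw [hdrop]
    exact NPath.cons ⟨⟨i, hi⟩, rfl⟩ (ih (i + 1) (by omega))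

lemma path_lin (w : List T) :
    NPath (linAuto (V := V) w) 0 (w.map Sum.inr) (Fin.last w.length) := by
  have h := path_from (V := V) w w.length 0 (by omega)
  simpa using h

theorem satClosure_linAuto_start {V T : Type} (G : CFG V T) (w : List T) :
    ((0 : Fin (w.length + 1)), Sum.inl G.S, Fin.last w.length) ∈
        satClosure G (linAuto w) ↔
      G.Derives [Sum.inl G.S] (w.map Sum.inr) := by
  constructor
  · intro h
    have hg := satClosure_subset (linAuto_subset_goodSet G w) (goodSet_closed G w) h
    have h2 := hg.2
    simp only [Fin.val_zero, Fin.val_last] at h2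
    rwa [seg_full] at h2
  · intro h
    have hpath : NPath (satClosure G (linAuto w)) 0 [Sum.inl G.S] (Fin.last w.length) := by
      refine Relation.ReflTransGen.head_induction_on h ?_ ?_
      · exact npath_mono subset_satClosure (path_lin w)
      · rintro a c ⟨α, γ, A, β, hP, rfl, rfl⟩ _ ih
        rw [List.append_assoc] at ih
        obtain ⟨m, hα, hrest⟩ := npath_split ih
        obtain ⟨m', hβ, hγ⟩ := npath_split hrest
        have htrans := satClosed_satClosure A β m m' hP hβ
        exact npath_append hα (NPath.cons htrans hγ)
    cases hpath with
    | cons ht hp =>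
      cases hp with
      | nil => exact ht
end Main
end
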